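/- arXiv:2603.28260 — 2 statements merged into one kernel-verified Lean document; each statement's English description precedes it below -/
import Mathlib

section
/- Let n ≥ 3 and view the vertices of an oriented n-ring as ZMod n with the leader at 0, where edge i is {i, i+1} and, for a vertex w ≠ 0, its two arc-distances to the leader are (w.val) and (n − w.val). For every Finset S of ZMod n (a set of edges, indexed by their first endpoint) with S.card ≥ 5, there exist i ∈ S and an endpoint w ∈ {i, i+1} such that w ≠ 0 and 2 * max (w.val) (n - w.val) ≥ n + 2. -/
/-!
A vertex `w ≠ 0` that violates the bound has `n - 2 < 2 * w.val < n + 2`, so it is one of the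
residues `(n - 1) / 2`, `n / 2`, `(n + 1) / 2`. With the leader this leaves at most four bad
vertices, and already the first endpoints of five distinct edges cannot all be bad.
-/

open Finset

def leaderAndAntipodes (n : ℕ) : Finset (ZMod n) :=
  ({0, (n - 1) / 2, n / 2, (n + 1) / 2} : Finset ℕ).image Nat.cast

lemma card_leaderAndAntipodes_le (n : ℕ) : #(leaderAndAntipodes n) ≤ 4 :=
  card_image_le.trans card_le_four

lemma Nat.mem_near_half_of_two_mul_max_lt {v n : ℕ} (h : 2 * max v (n - v) < n + 2) :
    v ∈ ({(n - 1) / 2, n / 2, (n + 1) / 2} : Finset ℕ) := by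
  simp only [mem_insert, mem_singleton]
  omega

lemma mem_leaderAndAntipodes_of_two_mul_max_val_lt {n : ℕ} [NeZero n] {w : ZMod n}
    (hw : w ≠ 0 → 2 * max w.val (n - w.val) < n + 2) : w ∈ leaderAndAntipodes n := by
  refine mem_image.2 ⟨w.val, ?_, ZMod.natCast_zmod_val w⟩
  by_cases h0 : w = 0
  · simp [h0]
  · exact mem_insert_of_mem (Nat.mem_near_half_of_two_mul_max_lt (hw h0))

/-- Among any five edges of an oriented `n`-ring (vertices `ZMod n`, leader at `0`,
edge `i = {i, i+1}`), some edge has an endpoint `w ≠ 0` whose longer arc-distance to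
the leader is at least `n/2 + 1` (integer form: `2 * max w.val (n - w.val) ≥ n + 2`). -/
theorem stmt_5 (n : ℕ) (hn : 3 ≤ n) (S : Finset (ZMod n)) (hS : 5 ≤ S.card) :
    ∃ i ∈ S, ∃ w ∈ ({i, i + 1} : Finset (ZMod n)),
      w ≠ 0 ∧ 2 * max w.val (n - w.val) ≥ n + 2 := by
  have : NeZero n := ⟨by omega⟩
  by_contra! hbad
  have hsub : S ⊆ leaderAndAntipodes n := fun i hi =>
    mem_leaderAndAntipodes_of_two_mul_max_val_lt (hbad i hi i (mem_insert_self i _))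
  have := (card_le_card hsub).trans (card_leaderAndAntipodes_le n)
  omega
end

section
/- For every natural number λ, the sum of the iterates of the base-2 logarithm starting at λ is at most 2λ: ∑_{j ∈ Finset.range (λ + 1)} ((Nat.log 2)^[j] λ) ≤ 2 * λ, where (Nat.log 2)^[j] denotes the j-fold iterate of m ↦ Nat.log 2 m. -/
/-!
Since `2 * Nat.log 2 n ≤ n`, each iterate is at most half of the previous one, so the sum is
dominated by the geometric series `λ + λ/2 + λ/4 + ⋯ ≤ 2λ`. Bounding sums of every length at once
lets an induction peel off the first term, with no need to track when the iterates reach `0`.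
-/

open Finset

theorem Nat.mul_log_le_self {b : ℕ} (hb : b ≠ 1) (n : ℕ) : b * Nat.log b n ≤ n := by
  rcases eq_or_ne n 0 with rfl | hn
  · simp
  · exact (Nat.mul_le_pow hb _).trans (Nat.pow_log_le_self b hn)

theorem Nat.mul_sum_range_iterate_le {f : ℕ → ℕ} {b : ℕ} (hf : ∀ n, (b + 1) * f n ≤ n) (N n : ℕ) :
    b * ∑ j ∈ range N, f^[j] n ≤ (b + 1) * n := by
  induction N generalizing n with
  | zero => simp
  | succ N ih =>
    simp only [sum_range_succ', Function.iterate_succ_apply, Function.iterate_zero_apply]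
    calc b * (∑ j ∈ range N, f^[j] (f n) + n)
        = b * ∑ j ∈ range N, f^[j] (f n) + b * n := mul_add _ _ _
      _ ≤ (b + 1) * f n + b * n := Nat.add_le_add_right (ih (f n)) _
      _ ≤ n + b * n := Nat.add_le_add_right (hf n) _
      _ = (b + 1) * n := by ring

/-- The sum of the iterates of the base-2 logarithm starting at `λ` is at most `2λ`:
`∑ j in range (λ+1), (Nat.log 2)^[j] λ ≤ 2 * λ`. -/
theorem stmt_8 (lam : ℕ) :
    ∑ j ∈ Finset.range (lam + 1), (Nat.log 2)^[j] lam ≤ 2 * lam := by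
  simpa using Nat.mul_sum_range_iterate_le (b := 1) (Nat.mul_log_le_self (by decide)) (lam + 1) lam
end
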